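/- (AIPW identification with a standard reference, r ∈ {0,1}.) Let r ∈ {0,1} and d = 1 − r. Assume ignorability for Y(r) and the strict common-support condition p_r ≥ ε almost surely for some ε > 0. Then the unexplained part satisfies the augmented inverse probability weighting representation Δ_S^{r,d} = E[(Y^obs − g_r)·(𝟙{D = d} − 𝟙{D = r}·p_d / p_r)] / P(D = d). -/

import Mathlib

open MeasureTheory ProbabilityTheory

/-- `E[Z | D = d]`: the conditional mean of `Z` given group membership `D = d`,
i.e. `E[Z · 𝟙{D = d}] / P(D = d)`. -/
noncomputable def condMean {Ω : Type*} {m : MeasurableSpace Ω} (P : Measure Ω)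
    (Z : Ω → ℝ) (D : Ω → ℕ) (d : ℕ) : ℝ :=
  (∫ ω, Z ω * (if D ω = d then (1:ℝ) else 0) ∂P) / (P {ω | D ω = d}).toReal

/-- `p_r`: the propensity score of group `r` (`p₁` if `r = 1`, and `p₀ = 1 - p₁` if `r = 0`). -/
noncomputable def pscore {Ω : Type*} (p₁ : Ω → ℝ) (r : ℕ) (ω : Ω) : ℝ :=
  if r = 1 then p₁ ω else 1 - p₁ ω

section Aux
open MeasurableSpace Set

lemma condexp_mul_indicator_of_condIndepFun
    {Ω : Type*} {mΩ : MeasurableSpace Ω} [StandardBorelSpace Ω]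
    (μ : Measure Ω) [IsProbabilityMeasure μ]
    {𝒢 : MeasurableSpace Ω} (h𝒢le : 𝒢 ≤ mΩ)
    {f : Ω → ℝ} {D : Ω → ℕ} (hf : Measurable[mΩ] f) (hfi : Integrable f μ)
    (hD : Measurable[mΩ] D) (hind : CondIndepFun 𝒢 h𝒢le f D (μ := μ)) (k : ℕ) :
    μ[fun ω => f ω * (if D ω = k then (1:ℝ) else 0)|𝒢]
      =ᵐ[μ] fun ω => (μ[f|𝒢]) ω
        * (μ[fun ω' => (if D ω' = k then (1:ℝ) else 0)|𝒢]) ω := by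
  have h1 : ∀ (q : ℚ) (n : ℕ), ∀ᵐ ω ∂(μ.trim h𝒢le),
      condExpKernel (mΩ := mΩ) μ 𝒢 ω ((f ⁻¹' Iic (q:ℝ)) ∩ (D ⁻¹' {n}))
        = condExpKernel (mΩ := mΩ) μ 𝒢 ω (f ⁻¹' Iic (q:ℝ)) * condExpKernel (mΩ := mΩ) μ 𝒢 ω (D ⁻¹' {n}) :=
    fun q n => hind _ _ ⟨Iic (q:ℝ), measurableSet_Iic, rfl⟩ ⟨{n}, measurableSet_singleton n, rfl⟩
  have h2 : ∀ᵐ ω ∂(μ.trim h𝒢le), ∀ (q : ℚ) (n : ℕ),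
      condExpKernel (mΩ := mΩ) μ 𝒢 ω ((f ⁻¹' Iic (q:ℝ)) ∩ (D ⁻¹' {n}))
        = condExpKernel (mΩ := mΩ) μ 𝒢 ω (f ⁻¹' Iic (q:ℝ)) * condExpKernel (mΩ := mΩ) μ 𝒢 ω (D ⁻¹' {n}) := by
    rw [ae_all_iff]
    exact fun q => ae_all_iff.2 (h1 q)
  have h3 : ∀ᵐ ω ∂μ, ∀ (q : ℚ) (n : ℕ),
      condExpKernel (mΩ := mΩ) μ 𝒢 ω ((f ⁻¹' Iic (q:ℝ)) ∩ (D ⁻¹' {n}))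
        = condExpKernel (mΩ := mΩ) μ 𝒢 ω (f ⁻¹' Iic (q:ℝ)) * condExpKernel (mΩ := mΩ) μ 𝒢 ω (D ⁻¹' {n}) := by
    rw [ae_iff] at h2 ⊢
    exact le_antisymm (le_trans (le_trim h𝒢le) h2.le) zero_le
  -- generating π-systems
  have hgen1 : MeasurableSpace.comap f (inferInstance : MeasurableSpace ℝ)
      = generateFrom (preimage f '' (⋃ a : ℚ, {Iic (a:ℝ)})) := by
    conv_lhs => rw [(BorelSpace.measurable_eq (α := ℝ)), Real.borel_eq_generateFrom_Iic_rat]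
    rw [comap_generateFrom]
  have hNat : (inferInstance : MeasurableSpace ℕ)
      = generateFrom (⋃ n : ℕ, {({n} : Set ℕ)}) := by
    refine le_antisymm (fun s _ => ?_) (generateFrom_le fun t _ => trivial)
    have hs : s = ⋃ n ∈ s, {n} := (Set.biUnion_of_singleton s).symm
    rw [hs]
    exact MeasurableSet.biUnion (Set.to_countable s)
      fun n _ => measurableSet_generateFrom (Set.mem_iUnion.2 ⟨n, rfl⟩)
  have hgen2 : MeasurableSpace.comap D (inferInstance : MeasurableSpace ℕ)
      = generateFrom (preimage D '' (⋃ n : ℕ, {({n} : Set ℕ)})) := by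
    conv_lhs => rw [hNat]
    rw [comap_generateFrom]
  have hpi1 : IsPiSystem (preimage f '' (⋃ a : ℚ, {Iic (a:ℝ)})) :=
    Real.isPiSystem_Iic_rat.comap f
  have hpi2 : IsPiSystem (preimage D '' (⋃ n : ℕ, {({n} : Set ℕ)})) := by
    have : IsPiSystem (⋃ n : ℕ, {({n} : Set ℕ)}) := by
      rintro s hs t ht hst
      simp only [Set.mem_iUnion, Set.mem_singleton_iff] at hs ht
      obtain ⟨a, rfl⟩ := hs; obtain ⟨b, rfl⟩ := ht
      obtain ⟨x, hxa, hxb⟩ := hst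
      simp only [Set.mem_singleton_iff] at hxa hxb
      subst hxa; subst hxb
      simp
    exact this.comap D
  have h4 : ∀ᵐ ω ∂μ, IndepFun f D (condExpKernel (mΩ := mΩ) μ 𝒢 ω) := by
    filter_upwards [h3] with ω hω
    have hI : IndepSets (preimage f '' (⋃ a : ℚ, {Iic (a:ℝ)}))
        (preimage D '' (⋃ n : ℕ, {({n} : Set ℕ)})) (condExpKernel (mΩ := mΩ) μ 𝒢 ω) := by
      rw [IndepSets_iff]
      rintro t1 t2 ⟨s1, hs1, rfl⟩ ⟨s2, hs2, rfl⟩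
      simp only [Set.mem_iUnion, Set.mem_singleton_iff] at hs1 hs2
      obtain ⟨q, rfl⟩ := hs1; obtain ⟨n, rfl⟩ := hs2
      exact hω q n
    rw [IndepFun_iff_Indep]
    exact IndepSets.indep hf.comap_le hD.comap_le hpi1 hpi2 hgen1 hgen2 hI
  have h5 : ∀ᵐ ω ∂μ, Integrable f (condExpKernel (mΩ := mΩ) μ 𝒢 ω) := MeasureTheory.Integrable.condExpKernel_ae (mΩ := mΩ) (m := 𝒢) hfi
  have hψ : Measurable (fun n : ℕ => if n = k then (1:ℝ) else 0) := measurable_from_top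
  have hχm : Measurable[mΩ] (fun y => if D y = k then (1:ℝ) else 0) := hψ.comp hD
  have hχbd : ∀ y : Ω, ‖if D y = k then (1:ℝ) else 0‖ ≤ 1 := by
    intro y; by_cases h : D y = k <;> simp [h]
  have h6 : ∀ᵐ ω ∂μ, ∫ y, f y * (if D y = k then (1:ℝ) else 0) ∂(condExpKernel (mΩ := mΩ) μ 𝒢 ω)
      = (∫ y, f y ∂(condExpKernel (mΩ := mΩ) μ 𝒢 ω))
        * ∫ y, (if D y = k then (1:ℝ) else 0) ∂(condExpKernel (mΩ := mΩ) μ 𝒢 ω) := by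
    filter_upwards [h4, h5] with ω hω hfint
    have hω2 : IndepFun f (fun y => if D y = k then (1:ℝ) else 0) (condExpKernel (mΩ := mΩ) μ 𝒢 ω) := by
      have := hω.comp measurable_id hψ
      exact this
    have hχint : Integrable (fun y => if D y = k then (1:ℝ) else 0) (condExpKernel (mΩ := mΩ) μ 𝒢 ω) := by
      refine Integrable.mono' (integrable_const 1) hχm.aestronglyMeasurable ?_
      exact Filter.Eventually.of_forall hχbd
    exact hω2.integral_fun_mul_eq_mul_integral hfint.1 hχint.1
  have hχμ : Integrable (fun ω => (if D ω = k then (1:ℝ) else 0)) μ := by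
    refine Integrable.mono' (integrable_const 1) hχm.aestronglyMeasurable ?_
    exact Filter.Eventually.of_forall hχbd
  have hfχμ : Integrable (fun ω => f ω * (if D ω = k then (1:ℝ) else 0)) μ := by
    have := hfi.bdd_mul (c := 1) hχm.aestronglyMeasurable
      (Filter.Eventually.of_forall fun y => by by_cases h : D y = k <;> simp [h])
    exact this.congr (Filter.Eventually.of_forall fun ω => mul_comm _ _)
  have e1 := condExp_ae_eq_integral_condExpKernel (mΩ := mΩ) h𝒢le hfχμ
  have e2 := condExp_ae_eq_integral_condExpKernel (mΩ := mΩ) h𝒢le hfi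
  have e3 := condExp_ae_eq_integral_condExpKernel (mΩ := mΩ) h𝒢le hχμ
  filter_upwards [e1, e2, e3, h6] with ω he1 he2 he3 h6ω
  rw [he1, he2, he3]
  exact h6ω

end Aux

/-- AIPW identification with a standard reference `r ∈ {0,1}`, under the strict
common-support condition `p_r ≥ ε` a.s. -/
theorem stmt_6
    {Ω 𝒳 : Type*} (𝒢 : MeasurableSpace Ω) [mΩ : MeasurableSpace Ω] [StandardBorelSpace Ω]
    [MeasurableSpace 𝒳]
    (P : Measure Ω) [IsProbabilityMeasure P]
    (X : Ω → 𝒳) (hX : Measurable X)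
    (h𝒢 : 𝒢 = MeasurableSpace.comap X inferInstance)
    (h𝒢le : 𝒢 ≤ mΩ)
    (D : Ω → ℕ) (hD : Measurable D) (hD01 : ∀ ω, D ω = 0 ∨ D ω = 1)
    (hD1pos : 0 < P {ω | D ω = 1}) (hD1lt : P {ω | D ω = 1} < 1)
    (Y : ℕ → Ω → ℝ) (hY0int : Integrable (Y 0) P) (hY1int : Integrable (Y 1) P)
    (Yobs : Ω → ℝ)
    (hYobs : ∀ ω, Yobs ω = (D ω : ℝ) * Y 1 ω + (1 - (D ω : ℝ)) * Y 0 ω)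
    (p₁ : Ω → ℝ) (hp₁meas : Measurable[𝒢] p₁)
    (hp₁ : p₁ =ᵐ[P] P[fun ω => (D ω : ℝ) | 𝒢])
    (hp₁0 : ∀ ω, 0 ≤ p₁ ω) (hp₁1 : ∀ ω, p₁ ω ≤ 1)
    (r d : ℕ) (hrd : (r = 0 ∧ d = 1) ∨ (r = 1 ∧ d = 0))
    (higr : CondIndepFun 𝒢 h𝒢le (Y r) D (μ := P))
    (ε : ℝ) (hε : 0 < ε) (hcs : ∀ᵐ ω ∂P, ε ≤ pscore p₁ r ω)
    (gr : Ω → ℝ) (hgrmeas : Measurable[𝒢] gr) (hgrint : Integrable gr P)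
    (hgr : (fun ω => gr ω * pscore p₁ r ω)
      =ᵐ[P] P[fun ω => Yobs ω * (if D ω = r then (1:ℝ) else 0) | 𝒢]) :
    condMean P (Y d) D d - condMean P (Y r) D d
      = (∫ ω, (Yobs ω - gr ω) * ((if D ω = d then (1:ℝ) else 0)
          - (if D ω = r then (1:ℝ) else 0) * (pscore p₁ d ω / pscore p₁ r ω)) ∂P)
        / (P {ω | D ω = d}).toReal := by
  classical
  letI : MeasurableSpace Ω := mΩ
  have hDm : Measurable[mΩ] D := hD
  have hp₁m : Measurable[mΩ] p₁ := hp₁meas.mono h𝒢le le_rfl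
  have hgrm : Measurable[mΩ] gr := hgrmeas.mono h𝒢le le_rfl
  have hrmem : r = 0 ∨ r = 1 := by rcases hrd with ⟨hr, _⟩ | ⟨hr, _⟩; exacts [Or.inl hr, Or.inr hr]
  have hdmem : d = 0 ∨ d = 1 := by rcases hrd with ⟨_, hd⟩ | ⟨_, hd⟩; exacts [Or.inr hd, Or.inl hd]
  -- indicators
  have hψ : ∀ k : ℕ, Measurable (fun n : ℕ => if n = k then (1:ℝ) else 0) :=
    fun _ => measurable_from_top
  have hχm : ∀ k : ℕ, Measurable[mΩ] (fun ω => if D ω = k then (1:ℝ) else 0) :=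
    fun k => (hψ k).comp hDm
  have hχbd : ∀ (k : ℕ) (y : Ω), ‖if D y = k then (1:ℝ) else 0‖ ≤ 1 := by
    intro k y; by_cases h : D y = k <;> simp [h]
  have hχint : ∀ k : ℕ, Integrable (fun ω => if D ω = k then (1:ℝ) else 0) P :=
    fun k => (integrable_const (1:ℝ)).mono' ((hχm k).aestronglyMeasurable)
      (Filter.Eventually.of_forall (hχbd k))
  have hmulχ : ∀ (g : Ω → ℝ), Integrable g P → ∀ k : ℕ,
      Integrable (fun ω => g ω * (if D ω = k then (1:ℝ) else 0)) P := by
    intro g hg k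
    have h1 := hg.bdd_mul (c := 1) ((hχm k).aestronglyMeasurable)
      (Filter.Eventually.of_forall (hχbd k))
    exact h1.congr (Filter.Eventually.of_forall fun ω => mul_comm _ _)
  -- propensity bounds
  have hps0 : ∀ (k : ℕ) (ω : Ω), 0 ≤ pscore p₁ k ω := by
    intro k ω; unfold pscore; split
    · exact hp₁0 ω
    · linarith [hp₁1 ω]
  have hps1 : ∀ (k : ℕ) (ω : Ω), pscore p₁ k ω ≤ 1 := by
    intro k ω; unfold pscore; split
    · exact hp₁1 ω
    · linarith [hp₁0 ω]
  have hpsm : ∀ k : ℕ, Measurable[𝒢] (pscore p₁ k) := by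
    intro k; unfold pscore
    by_cases hk : k = 1 <;> simp only [hk, if_true, if_false]
    · exact hp₁meas
    · exact measurable_const.sub hp₁meas
  have hhm𝒢 : Measurable[𝒢] (fun ω => pscore p₁ d ω / pscore p₁ r ω) :=
    (hpsm d).div (hpsm r)
  have hhm : Measurable[mΩ] (fun ω => pscore p₁ d ω / pscore p₁ r ω) :=
    hhm𝒢.mono h𝒢le le_rfl
  have hhbd : ∀ᵐ ω ∂P, ‖pscore p₁ d ω / pscore p₁ r ω‖ ≤ ε⁻¹ := by
    filter_upwards [hcs] with ω hω
    have hpr : 0 < pscore p₁ r ω := lt_of_lt_of_le hε hω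
    rw [Real.norm_eq_abs, abs_of_nonneg (div_nonneg (hps0 d ω) hpr.le)]
    calc pscore p₁ d ω / pscore p₁ r ω ≤ 1 / ε := div_le_div₀ zero_le_one (hps1 d ω) hε hω
      _ = ε⁻¹ := one_div ε
  have hmulh : ∀ (g : Ω → ℝ), Integrable g P →
      Integrable (fun ω => (pscore p₁ d ω / pscore p₁ r ω) * g ω) P := fun g hg =>
    hg.bdd_mul (c := ε⁻¹) hhm.aestronglyMeasurable hhbd
  -- Yobs integrable
  have hYobsInt : Integrable Yobs P := by
    have h1 : Integrable (fun ω => Y 1 ω * (if D ω = 1 then (1:ℝ) else 0)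
        + Y 0 ω * (if D ω = 0 then (1:ℝ) else 0)) P :=
      (hmulχ _ hY1int 1).add (hmulχ _ hY0int 0)
    refine h1.congr (Filter.Eventually.of_forall fun ω => ?_)
    rcases hD01 ω with h | h <;> simp [hYobs, h]
  have hYrint : Integrable (Y r) P := by
    rcases hrd with ⟨hr, _⟩ | ⟨hr, _⟩ <;> rw [hr]
    exacts [hY0int, hY1int]
  -- measurable version of Y r
  obtain ⟨f, hfsm, hfe⟩ : ∃ f : Ω → ℝ, StronglyMeasurable[mΩ] f ∧ Y r =ᵐ[P] f :=
    ⟨hYrint.1.mk (Y r), hYrint.1.stronglyMeasurable_mk, hYrint.1.ae_eq_mk⟩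
  have hfm : Measurable[mΩ] f := hfsm.measurable
  have hfint : Integrable f P := hYrint.congr hfe
  -- conditional independence transfers to f
  have hcif : CondIndepFun 𝒢 h𝒢le f D (μ := P) := by
    refine Kernel.IndepFun.congr' higr ?_
      (Filter.Eventually.of_forall fun ω => Filter.EventuallyEq.rfl)
    have hN0 : P (toMeasurable P {x | ¬ Y r x = f x}) = 0 := by
      rw [measure_toMeasurable]
      exact ae_iff.mp hfe
    have hNmeas : MeasurableSet (toMeasurable P {x | ¬ Y r x = f x}) :=
      measurableSet_toMeasurable P _
    have hcond : (P⟦toMeasurable P {x | ¬ Y r x = f x}|𝒢⟧) =ᵐ[P] (0 : Ω → ℝ) := by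
      have hind0 : (toMeasurable P {x | ¬ Y r x = f x}).indicator
          (fun _ => (1:ℝ)) =ᵐ[P] (0 : Ω → ℝ) := by
        filter_upwards [measure_eq_zero_iff_ae_notMem.mp hN0] with x hx
        simp [Set.indicator_of_notMem hx]
      refine (condExp_congr_ae hind0).trans ?_
      rw [condExp_zero]
    have htrim0 : (P⟦toMeasurable P {x | ¬ Y r x = f x}|𝒢⟧) =ᵐ[P.trim h𝒢le] (0 : Ω → ℝ) :=
      (StronglyMeasurable.ae_eq_trim_iff h𝒢le stronglyMeasurable_condExp stronglyMeasurable_zero).mpr hcond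
    have hker := condExpKernel_ae_eq_trim_condExp (mΩ := mΩ) (μ := P) h𝒢le hNmeas
    filter_upwards [hker, htrim0] with ω h1 h2
    have hz : condExpKernel (mΩ := mΩ) P 𝒢 ω (toMeasurable P {x | ¬ Y r x = f x}) = 0 := by
      have h3 : (condExpKernel (mΩ := mΩ) P 𝒢 ω (toMeasurable P {x | ¬ Y r x = f x})).toReal
          = 0 := by rw [← measureReal_def, h1, h2]; rfl
      exact (ENNReal.toReal_eq_zero_iff _).mp h3 |>.resolve_right (measure_ne_top _ _)
    have hsub : condExpKernel (mΩ := mΩ) P 𝒢 ω {x | ¬ Y r x = f x} = 0 :=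
      measure_mono_null (subset_toMeasurable P _) hz
    rw [Filter.EventuallyEq, ae_iff]
    exact hsub
  -- conditional expectations of the indicators
  have hDcastm : Measurable[mΩ] (fun ω => (D ω : ℝ)) :=
    (measurable_from_top (f := fun n : ℕ => (n:ℝ))).comp hDm
  have hDcast : Integrable (fun ω => (D ω : ℝ)) P := by
    refine (integrable_const (1:ℝ)).mono' hDcastm.aestronglyMeasurable ?_
    refine Filter.Eventually.of_forall fun ω => ?_
    rcases hD01 ω with h | h <;> simp [h]
  have hρ : ∀ k : ℕ, (k = 0 ∨ k = 1) →
      P[fun ω => (if D ω = k then (1:ℝ) else 0)|𝒢] =ᵐ[P] pscore p₁ k := by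
    rintro k (rfl | rfl)
    · have he : (fun ω => (if D ω = 0 then (1:ℝ) else 0))
          =ᵐ[P] (fun _ => (1:ℝ)) - (fun ω => (D ω : ℝ)) := by
        refine Filter.Eventually.of_forall fun ω => ?_
        rcases hD01 ω with h | h <;> simp [h]
      refine (condExp_congr_ae he).trans ?_
      refine (condExp_sub (m := 𝒢) (integrable_const (1:ℝ)) hDcast).trans ?_
      have hconst : P[fun _ : Ω => (1:ℝ)|𝒢] = fun _ => (1:ℝ) := condExp_const h𝒢le (1:ℝ)
      filter_upwards [hp₁] with ω hω
      show (P[fun _ : Ω => (1:ℝ)|𝒢]) ω - (P[fun ω => (D ω : ℝ)|𝒢]) ω = pscore p₁ 0 ω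
      rw [hconst, ← hω]
      simp [pscore]
    · have he : (fun ω => (if D ω = 1 then (1:ℝ) else 0)) =ᵐ[P] fun ω => (D ω : ℝ) := by
        refine Filter.Eventually.of_forall fun ω => ?_
        rcases hD01 ω with h | h <;> simp [h]
      refine (condExp_congr_ae he).trans ?_
      refine hp₁.symm.trans ?_
      refine Filter.Eventually.of_forall fun ω => ?_
      simp [pscore]
  have hρr := hρ r hrmem
  have hρd := hρ d hdmem
  -- key factorizations
  have keyr := condexp_mul_indicator_of_condIndepFun P h𝒢le hfm hfint hDm hcif r
  have keyd := condexp_mul_indicator_of_condIndepFun P h𝒢le hfm hfint hDm hcif d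
  -- pointwise identification of Yobs on the groups
  have hobs : ∀ k : ℕ, (k = 0 ∨ k = 1) → ∀ ω,
      Yobs ω * (if D ω = k then (1:ℝ) else 0) = Y k ω * (if D ω = k then (1:ℝ) else 0) := by
    rintro k (rfl | rfl) ω <;> rcases hD01 ω with h | h <;> simp [hYobs, h]
  have hobs_r : (fun ω => Yobs ω * (if D ω = r then (1:ℝ) else 0))
      =ᵐ[P] fun ω => f ω * (if D ω = r then (1:ℝ) else 0) := by
    filter_upwards [hfe] with ω hω
    rw [hobs r hrmem ω, hω]
  -- identification of gr
  have hgr2 : (fun ω => gr ω * pscore p₁ r ω)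
      =ᵐ[P] fun ω => (P[f|𝒢]) ω * pscore p₁ r ω := by
    refine hgr.trans ?_
    refine (condExp_congr_ae hobs_r).trans ?_
    refine keyr.trans ?_
    filter_upwards [hρr] with ω hω
    rw [hω]
  have hgrf : gr =ᵐ[P] P[f|𝒢] := by
    filter_upwards [hgr2, hcs] with ω h1 h2
    exact mul_right_cancel₀ (lt_of_lt_of_le hε h2).ne' h1
  -- integrabilities for the assembly
  have hYobsχd_int := hmulχ Yobs hYobsInt d
  have hgrχd_int := hmulχ gr hgrint d
  have hYobsχr_int := hmulχ Yobs hYobsInt r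
  have hgrχr_int := hmulχ gr hgrint r
  have hhYobs_int : Integrable (fun ω => (pscore p₁ d ω / pscore p₁ r ω)
      * (Yobs ω * (if D ω = r then (1:ℝ) else 0))) P := hmulh _ hYobsχr_int
  have hhgr_int : Integrable (fun ω => (pscore p₁ d ω / pscore p₁ r ω)
      * (gr ω * (if D ω = r then (1:ℝ) else 0))) P := hmulh _ hgrχr_int
  -- C2 : ∫ gr χd = ∫ Y r χd
  have hC2 : ∫ ω, gr ω * (if D ω = d then (1:ℝ) else 0) ∂P
      = ∫ ω, Y r ω * (if D ω = d then (1:ℝ) else 0) ∂P := by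
    have e2 : P[fun ω => gr ω * (if D ω = d then (1:ℝ) else 0)|𝒢]
        =ᵐ[P] fun ω => gr ω * (P[fun ω' => (if D ω' = d then (1:ℝ) else 0)|𝒢]) ω :=
      condExp_mul_of_stronglyMeasurable_left hgrmeas.stronglyMeasurable hgrχd_int (hχint d)
    calc ∫ ω, gr ω * (if D ω = d then (1:ℝ) else 0) ∂P
        = ∫ ω, (P[fun ω => gr ω * (if D ω = d then (1:ℝ) else 0)|𝒢]) ω ∂P :=
          (integral_condExp h𝒢le).symm
      _ = ∫ ω, (P[f|𝒢]) ω * (P[fun ω' => (if D ω' = d then (1:ℝ) else 0)|𝒢]) ω ∂P := by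
          refine integral_congr_ae (e2.trans ?_)
          filter_upwards [hgrf] with ω hω
          rw [hω]
      _ = ∫ ω, (P[fun ω => f ω * (if D ω = d then (1:ℝ) else 0)|𝒢]) ω ∂P :=
          (integral_congr_ae keyd).symm
      _ = ∫ ω, f ω * (if D ω = d then (1:ℝ) else 0) ∂P := integral_condExp h𝒢le
      _ = ∫ ω, Y r ω * (if D ω = d then (1:ℝ) else 0) ∂P := by
          refine integral_congr_ae ?_
          filter_upwards [hfe] with ω hω
          rw [hω]
  -- C3 : ∫ h (Yobs χr) = ∫ h (gr χr)
  have hC3 : ∫ ω, (pscore p₁ d ω / pscore p₁ r ω)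
        * (Yobs ω * (if D ω = r then (1:ℝ) else 0)) ∂P
      = ∫ ω, (pscore p₁ d ω / pscore p₁ r ω)
        * (gr ω * (if D ω = r then (1:ℝ) else 0)) ∂P := by
    have hhgr𝒢 : Measurable[𝒢] (fun ω => (pscore p₁ d ω / pscore p₁ r ω) * gr ω) :=
      hhm𝒢.mul hgrmeas
    have hX_int : Integrable (fun ω => ((pscore p₁ d ω / pscore p₁ r ω) * gr ω)
        * (if D ω = r then (1:ℝ) else 0)) P :=
      hhgr_int.congr (Filter.Eventually.of_forall fun ω => (mul_assoc _ _ _).symm)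
    have e1 : P[fun ω => (pscore p₁ d ω / pscore p₁ r ω)
          * (Yobs ω * (if D ω = r then (1:ℝ) else 0))|𝒢]
        =ᵐ[P] fun ω => (pscore p₁ d ω / pscore p₁ r ω)
          * (P[fun ω' => Yobs ω' * (if D ω' = r then (1:ℝ) else 0)|𝒢]) ω :=
      condExp_mul_of_stronglyMeasurable_left hhm𝒢.stronglyMeasurable hhYobs_int hYobsχr_int
    have e2 : P[fun ω => ((pscore p₁ d ω / pscore p₁ r ω) * gr ω)
          * (if D ω = r then (1:ℝ) else 0)|𝒢]
        =ᵐ[P] fun ω => ((pscore p₁ d ω / pscore p₁ r ω) * gr ω)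
          * (P[fun ω' => (if D ω' = r then (1:ℝ) else 0)|𝒢]) ω :=
      condExp_mul_of_stronglyMeasurable_left hhgr𝒢.stronglyMeasurable hX_int (hχint r)
    calc ∫ ω, (pscore p₁ d ω / pscore p₁ r ω)
          * (Yobs ω * (if D ω = r then (1:ℝ) else 0)) ∂P
        = ∫ ω, (P[fun ω => (pscore p₁ d ω / pscore p₁ r ω)
            * (Yobs ω * (if D ω = r then (1:ℝ) else 0))|𝒢]) ω ∂P :=
          (integral_condExp h𝒢le).symm
      _ = ∫ ω, (pscore p₁ d ω / pscore p₁ r ω) * (gr ω * pscore p₁ r ω) ∂P := by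
          refine integral_congr_ae (e1.trans ?_)
          filter_upwards [hgr] with ω hω
          rw [← hω]
      _ = ∫ ω, (P[fun ω => ((pscore p₁ d ω / pscore p₁ r ω) * gr ω)
            * (if D ω = r then (1:ℝ) else 0)|𝒢]) ω ∂P := by
          refine (integral_congr_ae (e2.trans ?_)).symm
          filter_upwards [hρr] with ω hω
          rw [hω]
          ring
      _ = ∫ ω, ((pscore p₁ d ω / pscore p₁ r ω) * gr ω)
            * (if D ω = r then (1:ℝ) else 0) ∂P := integral_condExp h𝒢le
      _ = ∫ ω, (pscore p₁ d ω / pscore p₁ r ω)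
            * (gr ω * (if D ω = r then (1:ℝ) else 0)) ∂P :=
          integral_congr_ae (Filter.Eventually.of_forall fun ω => (mul_assoc _ _ _))
  -- final assembly
  simp only [condMean]
  rw [div_sub_div_same]
  congr 1
  have hexp : (fun ω => (Yobs ω - gr ω) * ((if D ω = d then (1:ℝ) else 0)
      - (if D ω = r then (1:ℝ) else 0) * (pscore p₁ d ω / pscore p₁ r ω)))
      = fun ω => (Yobs ω * (if D ω = d then (1:ℝ) else 0)
          - gr ω * (if D ω = d then (1:ℝ) else 0))
        - ((pscore p₁ d ω / pscore p₁ r ω) * (Yobs ω * (if D ω = r then (1:ℝ) else 0))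
          - (pscore p₁ d ω / pscore p₁ r ω) * (gr ω * (if D ω = r then (1:ℝ) else 0))) :=
    funext fun ω => by ring
  rw [hexp]
  have hI1 : Integrable (fun ω => Yobs ω * (if D ω = d then (1:ℝ) else 0)
      - gr ω * (if D ω = d then (1:ℝ) else 0)) P := hYobsχd_int.sub hgrχd_int
  have hI2 : Integrable (fun ω => (pscore p₁ d ω / pscore p₁ r ω)
        * (Yobs ω * (if D ω = r then (1:ℝ) else 0))
      - (pscore p₁ d ω / pscore p₁ r ω) * (gr ω * (if D ω = r then (1:ℝ) else 0))) P :=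
    hhYobs_int.sub hhgr_int
  have step1 : ∫ ω, ((Yobs ω * (if D ω = d then (1:ℝ) else 0)
        - gr ω * (if D ω = d then (1:ℝ) else 0))
      - ((pscore p₁ d ω / pscore p₁ r ω) * (Yobs ω * (if D ω = r then (1:ℝ) else 0))
        - (pscore p₁ d ω / pscore p₁ r ω) * (gr ω * (if D ω = r then (1:ℝ) else 0)))) ∂P
      = (∫ ω, (Yobs ω * (if D ω = d then (1:ℝ) else 0)
          - gr ω * (if D ω = d then (1:ℝ) else 0)) ∂P)
        - ∫ ω, ((pscore p₁ d ω / pscore p₁ r ω) * (Yobs ω * (if D ω = r then (1:ℝ) else 0))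
          - (pscore p₁ d ω / pscore p₁ r ω) * (gr ω * (if D ω = r then (1:ℝ) else 0))) ∂P :=
    integral_sub hI1 hI2
  have step2 : ∫ ω, (Yobs ω * (if D ω = d then (1:ℝ) else 0)
        - gr ω * (if D ω = d then (1:ℝ) else 0)) ∂P
      = (∫ ω, Yobs ω * (if D ω = d then (1:ℝ) else 0) ∂P)
        - ∫ ω, gr ω * (if D ω = d then (1:ℝ) else 0) ∂P :=
    integral_sub hYobsχd_int hgrχd_int
  have step3 : ∫ ω, ((pscore p₁ d ω / pscore p₁ r ω) * (Yobs ω * (if D ω = r then (1:ℝ) else 0))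
        - (pscore p₁ d ω / pscore p₁ r ω) * (gr ω * (if D ω = r then (1:ℝ) else 0))) ∂P
      = (∫ ω, (pscore p₁ d ω / pscore p₁ r ω) * (Yobs ω * (if D ω = r then (1:ℝ) else 0)) ∂P)
        - ∫ ω, (pscore p₁ d ω / pscore p₁ r ω) * (gr ω * (if D ω = r then (1:ℝ) else 0)) ∂P :=
    integral_sub hhYobs_int hhgr_int
  rw [step1, step2, step3, hC3, sub_self, sub_zero, hC2,
    integral_congr_ae (Filter.Eventually.of_forall (hobs d hdmem))]
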